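/- On ℝ^7 with coordinates (t, x, y, x_1, y_1, x_2, y_2), let Z_1 = ∂_t + x_1∂_x + y_1∂_y + x_2∂_{x_1} + y_2∂_{y_1}, Z_2 = ∂_{x_2}, Z_3 = ∂_{y_2}, and let Z'_1 = x_2(∂_t + x_1∂_x + y_1∂_y) + ∂_{x_1} + y_2∂_{y_1}, Z'_2 = ∂_{x_2}, Z'_3 = ∂_{y_2}. Then there is no open neighbourhood U of 0 in ℝ^7 and no C^∞ map φ : U → ℝ^7 with φ(0) = 0 such that the derivative Dφ(p) is a linear isomorphism for every p ∈ U and Dφ(p) maps the span of Z_1(p), Z_2(p), Z_3(p) onto the span of Z'_1(φ(p)), Z'_2(φ(p)), Z'_3(φ(p)) for every p ∈ U. -/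

import Mathlib

/-- Coordinates on `ℝ^7`: `(t, x, y, x₁, y₁, x₂, y₂)` = indices `0, …, 6`.
`Z₁ = ∂_t + x₁∂_x + y₁∂_y + x₂∂_{x₁} + y₂∂_{y₁}`. -/
def Z1 : (Fin 7 → ℝ) → Fin 7 → ℝ := fun p =>
  Pi.single 0 1 + p 3 • (Pi.single 1 (1 : ℝ) : Fin 7 → ℝ)
    + p 4 • (Pi.single 2 (1 : ℝ) : Fin 7 → ℝ)
    + p 5 • (Pi.single 3 (1 : ℝ) : Fin 7 → ℝ)
    + p 6 • (Pi.single 4 (1 : ℝ) : Fin 7 → ℝ)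

/-- `Z₂ = ∂_{x₂}`. -/
def Z2 : (Fin 7 → ℝ) → Fin 7 → ℝ := fun _ => Pi.single 5 1

/-- `Z₃ = ∂_{y₂}`. -/
def Z3 : (Fin 7 → ℝ) → Fin 7 → ℝ := fun _ => Pi.single 6 1

/-- `Z₁' = x₂(∂_t + x₁∂_x + y₁∂_y) + ∂_{x₁} + y₂∂_{y₁}`. -/
def Z1' : (Fin 7 → ℝ) → Fin 7 → ℝ := fun p =>
  p 5 • (Pi.single 0 (1 : ℝ) + p 3 • (Pi.single 1 (1 : ℝ) : Fin 7 → ℝ)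
      + p 4 • (Pi.single 2 (1 : ℝ) : Fin 7 → ℝ))
    + Pi.single 3 1
    + p 6 • (Pi.single 4 (1 : ℝ) : Fin 7 → ℝ)

/-- `Z₂' = ∂_{x₂}`. -/
def Z2' : (Fin 7 → ℝ) → Fin 7 → ℝ := fun _ => Pi.single 5 1

/-- `Z₃' = ∂_{y₂}`. -/
def Z3' : (Fin 7 → ℝ) → Fin 7 → ℝ := fun _ => Pi.single 6 1

section GNEAux

open ContinuousLinearMap

/-- Abbreviation for the model space. -/
abbrev E7 : Type := Fin 7 → ℝ

/-- Standard basis vectors. -/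
def ee (j : Fin 7) : E7 := Pi.single j 1

lemma eeval (j k : Fin 7) : ee j k = if k = j then 1 else 0 := by
  simp [ee, Pi.single_apply]

/-- The scalar function `x ↦ ∂_j φ_i (x)`. -/
noncomputable def gg (φ : E7 → E7) (j i : Fin 7) (x : E7) : ℝ := fderiv ℝ φ x (ee j) i

lemma gg_eq (φ : E7 → E7) (x : E7) (j i : Fin 7) : fderiv ℝ φ x (ee j) i = gg φ j i x := rfl

/-- The second derivative of `φ` as a bilinear map. -/
noncomputable def Bb (φ : E7 → E7) (p : E7) : E7 →L[ℝ] E7 →L[ℝ] E7 := fderiv ℝ (fderiv ℝ φ) p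

/-- The derivative of `gg φ j i` at `p`. -/
noncomputable def Dgg (φ : E7 → E7) (p : E7) (j i : Fin 7) : E7 →L[ℝ] ℝ :=
  ((ContinuousLinearMap.proj (R := ℝ) (φ := fun _ : Fin 7 => ℝ) i).comp
    (ContinuousLinearMap.apply ℝ E7 (ee j))).comp (Bb φ p)

lemma Dgg_apply (φ : E7 → E7) (p : E7) (j i : Fin 7) (v : E7) :
    Dgg φ p j i v = Bb φ p v (ee j) i := rfl

lemma hasFDerivAt_gg (φ : E7 → E7) (p : E7) (hB : HasFDerivAt (fderiv ℝ φ) (Bb φ p) p)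
    (j i : Fin 7) : HasFDerivAt (gg φ j i) (Dgg φ p j i) p :=
  (((ContinuousLinearMap.proj (R := ℝ) (φ := fun _ : Fin 7 => ℝ) i).comp
    (ContinuousLinearMap.apply ℝ E7 (ee j))).hasFDerivAt).comp p hB

/-- The scalar function `x ↦ (Dφ(x) Z₁(x))_i`, expanded by linearity. -/
noncomputable def Lff (φ : E7 → E7) (i : Fin 7) (x : E7) : ℝ :=
  gg φ 0 i x + x 3 * gg φ 1 i x + x 4 * gg φ 2 i x + x 5 * gg φ 3 i x + x 6 * gg φ 4 i x

lemma Lff_eq (φ : E7 → E7) (x : E7) (i : Fin 7) :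
    fderiv ℝ φ x (Z1 x) i = Lff φ i x := by
  simp only [Z1, Lff, gg, ee, map_add, map_smul, Pi.add_apply, Pi.smul_apply, smul_eq_mul]

/-- The derivative of `Lff φ i` at `p`. -/
noncomputable def DLf (φ : E7 → E7) (p : E7) (i : Fin 7) : E7 →L[ℝ] ℝ :=
  Dgg φ p 0 i
    + (p 3 • Dgg φ p 1 i + gg φ 1 i p • ContinuousLinearMap.proj 3)
    + (p 4 • Dgg φ p 2 i + gg φ 2 i p • ContinuousLinearMap.proj 4)
    + (p 5 • Dgg φ p 3 i + gg φ 3 i p • ContinuousLinearMap.proj 5)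
    + (p 6 • Dgg φ p 4 i + gg φ 4 i p • ContinuousLinearMap.proj 6)

lemma hasFDerivAt_Lff (φ : E7 → E7) (p : E7) (hB : HasFDerivAt (fderiv ℝ φ) (Bb φ p) p)
    (i : Fin 7) : HasFDerivAt (Lff φ i) (DLf φ p i) p := by
  exact ((((hasFDerivAt_gg φ p hB 0 i).add
      ((hasFDerivAt_apply (𝕜 := ℝ) 3 p).mul (hasFDerivAt_gg φ p hB 1 i))).add
      ((hasFDerivAt_apply (𝕜 := ℝ) 4 p).mul (hasFDerivAt_gg φ p hB 2 i))).add
      ((hasFDerivAt_apply (𝕜 := ℝ) 5 p).mul (hasFDerivAt_gg φ p hB 3 i))).add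
      ((hasFDerivAt_apply (𝕜 := ℝ) 6 p).mul (hasFDerivAt_gg φ p hB 4 i))

lemma DLf_apply (φ : E7 → E7) (p : E7) (i : Fin 7) (v : E7) :
    DLf φ p i v = Bb φ p v (ee 0) i + p 3 * Bb φ p v (ee 1) i + p 4 * Bb φ p v (ee 2) i
      + p 5 * Bb φ p v (ee 3) i + p 6 * Bb φ p v (ee 4) i
      + (v 3 * gg φ 1 i p + v 4 * gg φ 2 i p + v 5 * gg φ 3 i p + v 6 * gg φ 4 i p) := by
  simp [DLf, Dgg, ContinuousLinearMap.add_apply, ContinuousLinearMap.smul_apply, smul_eq_mul]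
  ring

lemma BZ_expand (φ : E7 → E7) (p : E7) (v : E7) (i : Fin 7) :
    Bb φ p v (Z1 p) i = Bb φ p v (ee 0) i + p 3 * Bb φ p v (ee 1) i + p 4 * Bb φ p v (ee 2) i
      + p 5 * Bb φ p v (ee 3) i + p 6 * Bb φ p v (ee 4) i := by
  simp [Z1, ee, map_add, map_smul, Pi.add_apply, Pi.smul_apply, smul_eq_mul]

lemma hspan (q : Fin 7 → ℝ) (w : Fin 7 → ℝ)
    (hw : w ∈ Submodule.span ℝ {Z1' q, Z2' q, Z3' q}) :
    w 0 = w 3 * q 5 ∧ w 2 = w 0 * q 4 ∧ w 4 = w 3 * q 6 := by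
  induction hw using Submodule.span_induction with
  | mem x hx =>
      simp only [Set.mem_insert_iff, Set.mem_singleton_iff] at hx
      rcases hx with rfl | rfl | rfl <;>
        simp (config := { decide := true })
          [Z1', Z2', Z3', Pi.single_apply, Pi.add_apply, Pi.smul_apply]
  | zero => norm_num
  | add x y hx hy ihx ihy =>
      obtain ⟨a1, a2, a3⟩ := ihx; obtain ⟨b1, b2, b3⟩ := ihy
      refine ⟨?_, ?_, ?_⟩ <;> simp only [Pi.add_apply]
      · linear_combination a1 + b1
      · linear_combination a2 + b2
      · linear_combination a3 + b3
  | smul a x hx ihx =>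
      obtain ⟨a1, a2, a3⟩ := ihx
      refine ⟨?_, ?_, ?_⟩ <;> simp only [Pi.smul_apply, smul_eq_mul]
      · linear_combination a * a1
      · linear_combination a * a2
      · linear_combination a * a3

end GNEAux

open ContinuousLinearMap in
/-- The germs at `0` of the distributions spanned by `(Z₁, Z₂, Z₃)` and
`(Z₁', Z₂', Z₃')` are not equivalent under any local diffeomorphism fixing `0`. -/
theorem germs_not_equivalent :
    ¬ ∃ (U : Set (Fin 7 → ℝ)) (φ : (Fin 7 → ℝ) → Fin 7 → ℝ),
      IsOpen U ∧ (0 : Fin 7 → ℝ) ∈ U ∧ φ 0 = 0 ∧ ContDiffOn ℝ (⊤ : ℕ∞) φ U ∧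
      (∀ p ∈ U, Function.Bijective (fderiv ℝ φ p)) ∧
      ∀ p ∈ U,
        Submodule.map (fderiv ℝ φ p).toLinearMap (Submodule.span ℝ {Z1 p, Z2 p, Z3 p})
          = Submodule.span ℝ {Z1' (φ p), Z2' (φ p), Z3' (φ p)} := by
  rintro ⟨U, φ, hU, hU0, hφ0, hsm, hbij, hmap⟩
  -- basic differentiability facts
  have hder : ∀ p ∈ U, HasFDerivAt φ (fderiv ℝ φ p) p := fun p hp =>
    ((hsm.contDiffAt (hU.mem_nhds hp)).differentiableAt (by simp)).hasFDerivAt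
  have hB : ∀ p ∈ U, HasFDerivAt (fderiv ℝ φ) (Bb φ p) p := fun p hp =>
    (((hsm.contDiffAt (hU.mem_nhds hp)).fderiv_right (m := 1) (by exact WithTop.coe_le_coe.mpr le_top)).differentiableAt one_ne_zero).hasFDerivAt
  have hsymm : ∀ p ∈ U, ∀ v w : E7, Bb φ p v w = Bb φ p w v := by
    intro p hp v w
    refine second_derivative_symmetric_of_eventually (f := φ) ?_ (hB p hp) v w
    filter_upwards [hU.mem_nhds hp] with y hy using hder y hy
  have hφk : ∀ p ∈ U, ∀ k : Fin 7, HasFDerivAt (fun x => φ x k)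
      ((ContinuousLinearMap.proj (R := ℝ) (φ := fun _ : Fin 7 => ℝ) k).comp (fderiv ℝ φ p)) p :=
    fun p hp k => (hasFDerivAt_apply (𝕜 := ℝ) k (φ p)).comp p (hder p hp)
  -- membership of the pushed-forward frame in the target span
  have hmemL : ∀ p ∈ U, ∀ w ∈ ({Z1 p, Z2 p, Z3 p} : Set E7),
      (fderiv ℝ φ p) w ∈ Submodule.span ℝ {Z1' (φ p), Z2' (φ p), Z3' (φ p)} := by
    intro p hp w hw
    rw [← hmap p hp]
    exact Submodule.mem_map_of_mem (Submodule.subset_span hw)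
  -- the scalar identities on U coming from the span condition
  have keyL : ∀ p ∈ U, Lff φ 0 p = Lff φ 3 p * φ p 5 ∧ Lff φ 2 p = Lff φ 0 p * φ p 4 ∧
      Lff φ 4 p = Lff φ 3 p * φ p 6 := by
    intro p hp
    have h := hspan (φ p) _ (hmemL p hp (Z1 p) (by simp))
    simpa only [Lff_eq] using h
  have key5 : ∀ p ∈ U, gg φ 5 0 p = gg φ 5 3 p * φ p 5 ∧ gg φ 5 2 p = gg φ 5 0 p * φ p 4 ∧
      gg φ 5 4 p = gg φ 5 3 p * φ p 6 := by
    intro p hp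
    exact hspan (φ p) _ (hmemL p hp (Z2 p) (by simp))
  have key6 : ∀ p ∈ U, gg φ 6 0 p = gg φ 6 3 p * φ p 5 ∧ gg φ 6 2 p = gg φ 6 0 p * φ p 4 ∧
      gg φ 6 4 p = gg φ 6 3 p * φ p 6 := by
    intro p hp
    exact hspan (φ p) _ (hmemL p hp (Z3 p) (by simp))
  -- derivative congruence helper
  have congrD : ∀ p ∈ U, ∀ (f1 f2 : E7 → ℝ) (D1 D2 : E7 →L[ℝ] ℝ),
      (∀ x ∈ U, f1 x = f2 x) → HasFDerivAt f1 D1 p → HasFDerivAt f2 D2 p → D1 = D2 := by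
    intro p hp f1 f2 D1 D2 heq h1 h2
    refine h1.unique (h2.congr_of_eventuallyEq ?_)
    filter_upwards [hU.mem_nhds hp] with y hy using heq y hy
  -- derivatives of the basic identities
  have EqD1 : ∀ p ∈ U, DLf φ p 2 =
      Lff φ 0 p • ((ContinuousLinearMap.proj (R := ℝ) (φ := fun _ : Fin 7 => ℝ) 4).comp
        (fderiv ℝ φ p)) + φ p 4 • DLf φ p 0 := by
    intro p hp
    exact congrD p hp _ _ _ _ (fun x hx => (keyL x hx).2.1)
      (hasFDerivAt_Lff φ p (hB p hp) 2)
      ((hasFDerivAt_Lff φ p (hB p hp) 0).mul (hφk p hp 4))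
  have EqD5 : ∀ p ∈ U, Dgg φ p 5 2 =
      gg φ 5 0 p • ((ContinuousLinearMap.proj (R := ℝ) (φ := fun _ : Fin 7 => ℝ) 4).comp
        (fderiv ℝ φ p)) + φ p 4 • Dgg φ p 5 0 := by
    intro p hp
    exact congrD p hp _ _ _ _ (fun x hx => (key5 x hx).2.1)
      (hasFDerivAt_gg φ p (hB p hp) 5 2)
      ((hasFDerivAt_gg φ p (hB p hp) 5 0).mul (hφk p hp 4))
  have EqD6 : ∀ p ∈ U, Dgg φ p 6 2 =
      gg φ 6 0 p • ((ContinuousLinearMap.proj (R := ℝ) (φ := fun _ : Fin 7 => ℝ) 4).comp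
        (fderiv ℝ φ p)) + φ p 4 • Dgg φ p 6 0 := by
    intro p hp
    exact congrD p hp _ _ _ _ (fun x hx => (key6 x hx).2.1)
      (hasFDerivAt_gg φ p (hB p hp) 6 2)
      ((hasFDerivAt_gg φ p (hB p hp) 6 0).mul (hφk p hp 4))
  -- the derived identities ∂₃φ₂ = ∂₃φ₀·φ₄ and ∂₄φ₂ = ∂₄φ₀·φ₄ on U
  have I3 : ∀ p ∈ U, gg φ 3 2 p = gg φ 3 0 p * φ p 4 := by
    intro p hp
    obtain ⟨kA, kB, kC⟩ := keyL p hp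
    obtain ⟨k5A, k5B, k5C⟩ := key5 p hp
    have e1 := congrArg (fun T : E7 →L[ℝ] ℝ => T (ee 5)) (EqD1 p hp)
    simp only [DLf_apply, ContinuousLinearMap.add_apply, ContinuousLinearMap.coe_smul',
      Pi.smul_apply, ContinuousLinearMap.comp_apply, ContinuousLinearMap.proj_apply,
      smul_eq_mul, gg_eq] at e1
    simp (config := { decide := true }) only [eeval, if_true, if_false] at e1
    norm_num at e1
    have e2 := congrArg (fun T : E7 →L[ℝ] ℝ => T (Z1 p)) (EqD5 p hp)
    simp only [Dgg_apply, ContinuousLinearMap.add_apply, ContinuousLinearMap.coe_smul',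
      Pi.smul_apply, ContinuousLinearMap.comp_apply, ContinuousLinearMap.proj_apply,
      smul_eq_mul] at e2
    have hs : ∀ i : Fin 7, Bb φ p (Z1 p) (ee 5) i = Bb φ p (ee 5) (Z1 p) i := fun i =>
      congrFun (hsymm p hp (Z1 p) (ee 5)) i
    rw [hs 2, hs 0, BZ_expand φ p (ee 5) 2, BZ_expand φ p (ee 5) 0, Lff_eq φ p 4] at e2
    linear_combination e1 - e2 + gg φ 5 4 p * kA + (Lff φ 3 p * φ p 5) * k5C
      - Lff φ 4 p * k5A - (gg φ 5 3 p * φ p 5) * kC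
  have I4 : ∀ p ∈ U, gg φ 4 2 p = gg φ 4 0 p * φ p 4 := by
    intro p hp
    obtain ⟨kA, kB, kC⟩ := keyL p hp
    obtain ⟨k6A, k6B, k6C⟩ := key6 p hp
    have e1 := congrArg (fun T : E7 →L[ℝ] ℝ => T (ee 6)) (EqD1 p hp)
    simp only [DLf_apply, ContinuousLinearMap.add_apply, ContinuousLinearMap.coe_smul',
      Pi.smul_apply, ContinuousLinearMap.comp_apply, ContinuousLinearMap.proj_apply,
      smul_eq_mul, gg_eq] at e1
    simp (config := { decide := true }) only [eeval, if_true, if_false] at e1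
    norm_num at e1
    have e2 := congrArg (fun T : E7 →L[ℝ] ℝ => T (Z1 p)) (EqD6 p hp)
    simp only [Dgg_apply, ContinuousLinearMap.add_apply, ContinuousLinearMap.coe_smul',
      Pi.smul_apply, ContinuousLinearMap.comp_apply, ContinuousLinearMap.proj_apply,
      smul_eq_mul] at e2
    have hs : ∀ i : Fin 7, Bb φ p (Z1 p) (ee 6) i = Bb φ p (ee 6) (Z1 p) i := fun i =>
      congrFun (hsymm p hp (Z1 p) (ee 6)) i
    rw [hs 2, hs 0, BZ_expand φ p (ee 6) 2, BZ_expand φ p (ee 6) 0, Lff_eq φ p 4] at e2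
    linear_combination e1 - e2 + gg φ 6 4 p * kA + (Lff φ 3 p * φ p 5) * k6C
      - Lff φ 4 p * k6A - (gg φ 6 3 p * φ p 5) * kC
  -- values at 0
  have hz : ∀ k : Fin 7, φ 0 k = 0 := fun k => by rw [hφ0]; rfl
  obtain ⟨kA0, kB0, kC0⟩ := keyL 0 hU0
  have L00 : Lff φ 0 0 = 0 := by rw [kA0, hz 5, mul_zero]
  have L40 : Lff φ 4 0 = 0 := by rw [kC0, hz 6, mul_zero]
  have L20 : Lff φ 2 0 = 0 := by rw [kB0, hz 4, mul_zero]
  have g040 : gg φ 0 4 0 = 0 := by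
    have h : Lff φ 4 0 = gg φ 0 4 0 := by simp [Lff]
    rw [← h]; exact L40
  have g020 : gg φ 0 2 0 = 0 := by
    have h : Lff φ 2 0 = gg φ 0 2 0 := by simp [Lff]
    rw [← h]; exact L20
  have g520 : gg φ 5 2 0 = 0 := by rw [(key5 0 hU0).2.1, hz 4, mul_zero]
  have g620 : gg φ 6 2 0 = 0 := by rw [(key6 0 hU0).2.1, hz 4, mul_zero]
  have g320 : gg φ 3 2 0 = 0 := by rw [I3 0 hU0, hz 4, mul_zero]
  have g420 : gg φ 4 2 0 = 0 := by rw [I4 0 hU0, hz 4, mul_zero]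
  -- DLf φ 0 2 is the zero map
  have hDL0 : DLf φ 0 2 = 0 := by
    rw [EqD1 0 hU0, L00, hz 4, zero_smul, zero_smul, add_zero]
  -- second derivative vanishing via the derived identities at 0
  have EqB3 : Dgg φ 0 3 2 =
      gg φ 3 0 0 • ((ContinuousLinearMap.proj (R := ℝ) (φ := fun _ : Fin 7 => ℝ) 4).comp
        (fderiv ℝ φ 0)) + φ 0 4 • Dgg φ 0 3 0 :=
    congrD 0 hU0 _ _ _ _ I3 (hasFDerivAt_gg φ 0 (hB 0 hU0) 3 2)
      ((hasFDerivAt_gg φ 0 (hB 0 hU0) 3 0).mul (hφk 0 hU0 4))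
  have EqB4 : Dgg φ 0 4 2 =
      gg φ 4 0 0 • ((ContinuousLinearMap.proj (R := ℝ) (φ := fun _ : Fin 7 => ℝ) 4).comp
        (fderiv ℝ φ 0)) + φ 0 4 • Dgg φ 0 4 0 :=
    congrD 0 hU0 _ _ _ _ I4 (hasFDerivAt_gg φ 0 (hB 0 hU0) 4 2)
      ((hasFDerivAt_gg φ 0 (hB 0 hU0) 4 0).mul (hφk 0 hU0 4))
  have B032 : Bb φ 0 (ee 0) (ee 3) 2 = 0 := by
    have e := congrArg (fun T : E7 →L[ℝ] ℝ => T (ee 0)) EqB3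
    simp only [Dgg_apply, ContinuousLinearMap.add_apply, ContinuousLinearMap.coe_smul',
      Pi.smul_apply, ContinuousLinearMap.comp_apply, ContinuousLinearMap.proj_apply,
      smul_eq_mul, gg_eq] at e
    rw [e, g040, hz 4, mul_zero, zero_add, zero_mul]
  have B042 : Bb φ 0 (ee 0) (ee 4) 2 = 0 := by
    have e := congrArg (fun T : E7 →L[ℝ] ℝ => T (ee 0)) EqB4
    simp only [Dgg_apply, ContinuousLinearMap.add_apply, ContinuousLinearMap.coe_smul',
      Pi.smul_apply, ContinuousLinearMap.comp_apply, ContinuousLinearMap.proj_apply,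
      smul_eq_mul, gg_eq] at e
    rw [e, g040, hz 4, mul_zero, zero_add, zero_mul]
  have g120 : gg φ 1 2 0 = 0 := by
    have e := congrArg (fun T : E7 →L[ℝ] ℝ => T (ee 3)) hDL0
    rw [DLf_apply] at e
    simp (config := { decide := true }) only [eeval, Pi.zero_apply,
      ContinuousLinearMap.zero_apply, if_true, if_false] at e
    norm_num at e
    have hs : Bb φ 0 (ee 3) (ee 0) 2 = Bb φ 0 (ee 0) (ee 3) 2 :=
      congrFun (hsymm 0 hU0 (ee 3) (ee 0)) 2
    rw [hs, B032] at e
    linarith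
  have g220 : gg φ 2 2 0 = 0 := by
    have e := congrArg (fun T : E7 →L[ℝ] ℝ => T (ee 4)) hDL0
    rw [DLf_apply] at e
    simp (config := { decide := true }) only [eeval, Pi.zero_apply,
      ContinuousLinearMap.zero_apply, if_true, if_false] at e
    norm_num at e
    have hs : Bb φ 0 (ee 4) (ee 0) 2 = Bb φ 0 (ee 0) (ee 4) 2 :=
      congrFun (hsymm 0 hU0 (ee 4) (ee 0)) 2
    rw [hs, B042] at e
    linarith
  -- the second row of Dφ(0) vanishes: contradiction with surjectivity
  obtain ⟨v, hv⟩ := (hbij 0 hU0).2 (Pi.single 2 1)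
  have hone : (fderiv ℝ φ 0 v) 2 = 1 := by rw [hv]; simp
  have hzero : (fderiv ℝ φ 0 v) 2 = 0 := by
    have hv' : v = ∑ j : Fin 7, v j • ee j := by
      conv_lhs => rw [← Finset.univ_sum_single v]
      refine Finset.sum_congr rfl fun j _ => ?_
      rw [ee, ← Pi.single_smul, smul_eq_mul, mul_one]
    rw [hv', map_sum]
    simp only [map_smul]
    rw [Finset.sum_apply]
    simp only [Pi.smul_apply, gg_eq, smul_eq_mul]
    rw [Fin.sum_univ_seven]
    rw [g020, g120, g220, g320, g420, g520, g620]
    ring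
  rw [hone] at hzero
  exact one_ne_zero hzero
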